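/- Let u, Y : ℝ × I → ℝ be smooth (I an open interval), λ ∈ ℝ, and suppose u satisfies the KdV equation ∂_t u = ∂_x³ u − 6 u ∂_x u, Y satisfies ∂_x³ Y = 4(u − λ) ∂_x Y + 2(∂_x u) Y, and ∂_t Y = 2(∂_x u) Y − 2(u + 2λ) ∂_x Y. Then the quantity Φ = 2 Y ∂_x² Y − (∂_x Y)² + 4(λ − u) Y² satisfies ∂_x Φ = 0 and ∂_t Φ = 0, i.e. Φ is an absolute constant on ℝ × I. -/

import Mathlib

open Set Function

noncomputable section

/-- Partial derivative in the first (space) variable. -/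
def pdx (u : ℝ → ℝ → ℝ) : ℝ → ℝ → ℝ := fun x t => deriv (fun x' => u x' t) x

/-- Partial derivative in the second (time) variable. -/
def pdt (u : ℝ → ℝ → ℝ) : ℝ → ℝ → ℝ := fun x t => deriv (fun t' => u x t') t

/-!
Differentiating `Φ = 2 Y Y_xx - Y_x² + 4(λ - u) Y²` in `x` gives `2 Y (Y_xxx - 4(u - λ) Y_x - 2 u_x Y)`,
which vanishes by the stationary equation. For the `t`-derivative, exchange `∂_t` and `∂_x` to get
`Y_xt = 2 u_xx Y - 2(u + 2λ) Y_xx` and `Y_xxt = 2 u_xxx Y + 2 u_xx Y_x - 2 u_x Y_xx - 2(u + 2λ) Y_xxx`;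
substituting these, the KdV equation and the stationary equation into `∂_t Φ` leaves a polynomial
identity. A function on `ℝ × I` with vanishing partial derivatives is constant since `I` is connected.
-/

section Slices

variable {E : Type*} [NormedAddCommGroup E] [NormedSpace ℝ E]
  {g : ℝ × ℝ → E} {g' : ℝ × ℝ →L[ℝ] E} {x t : ℝ}

theorem HasFDerivAt.hasDerivAt_slice_fst (h : HasFDerivAt g g' (x, t)) :
    HasDerivAt (fun x' => g (x', t)) (g' (1, 0)) x :=
  h.comp_hasDerivAt x ((hasDerivAt_id x).prodMk (hasDerivAt_const x t))

theorem HasFDerivAt.hasDerivAt_slice_snd (h : HasFDerivAt g g' (x, t)) :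
    HasDerivAt (fun t' => g (x, t')) (g' (0, 1)) t :=
  h.comp_hasDerivAt t ((hasDerivAt_const t x).prodMk (hasDerivAt_id t))

end Slices

namespace KdV

section Partials

variable {I : Set ℝ} {f : ℝ → ℝ → ℝ} {x t : ℝ}

theorem differentiableAt_uncurry (hI : IsOpen I)
    (hf : ContDiffOn ℝ (⊤ : ℕ∞) (uncurry f) (univ ×ˢ I)) (ht : t ∈ I) :
    DifferentiableAt ℝ (uncurry f) (x, t) :=
  (hf.differentiableOn (by simp)).differentiableAt
    ((isOpen_univ.prod hI).mem_nhds ⟨trivial, ht⟩)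

theorem pdx_eq_fderiv (h : DifferentiableAt ℝ (uncurry f) (x, t)) :
    pdx f x t = fderiv ℝ (uncurry f) (x, t) (1, 0) :=
  h.hasFDerivAt.hasDerivAt_slice_fst.deriv

theorem pdt_eq_fderiv (h : DifferentiableAt ℝ (uncurry f) (x, t)) :
    pdt f x t = fderiv ℝ (uncurry f) (x, t) (0, 1) :=
  h.hasFDerivAt.hasDerivAt_slice_snd.deriv

theorem hasDerivAt_pdx (hI : IsOpen I)
    (hf : ContDiffOn ℝ (⊤ : ℕ∞) (uncurry f) (univ ×ˢ I)) (ht : t ∈ I) :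
    HasDerivAt (fun x' => f x' t) (pdx f x t) x :=
  (differentiableAt_uncurry hI hf ht).hasFDerivAt.hasDerivAt_slice_fst.differentiableAt.hasDerivAt

theorem hasDerivAt_pdt (hI : IsOpen I)
    (hf : ContDiffOn ℝ (⊤ : ℕ∞) (uncurry f) (univ ×ˢ I)) (ht : t ∈ I) :
    HasDerivAt (fun t' => f x t') (pdt f x t) t :=
  (differentiableAt_uncurry hI hf ht).hasFDerivAt.hasDerivAt_slice_snd.differentiableAt.hasDerivAt

theorem contDiffOn_fderiv_uncurry (hI : IsOpen I)
    (hf : ContDiffOn ℝ (⊤ : ℕ∞) (uncurry f) (univ ×ˢ I)) :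
    ContDiffOn ℝ (⊤ : ℕ∞) (fderiv ℝ (uncurry f)) (univ ×ˢ I) :=
  hf.fderiv_of_isOpen (isOpen_univ.prod hI) (by exact_mod_cast le_top)

theorem contDiffOn_pdx (hI : IsOpen I)
    (hf : ContDiffOn ℝ (⊤ : ℕ∞) (uncurry f) (univ ×ˢ I)) :
    ContDiffOn ℝ (⊤ : ℕ∞) (uncurry (pdx f)) (univ ×ˢ I) := by
  have hD : ContDiffOn ℝ (⊤ : ℕ∞) (fun p => fderiv ℝ (uncurry f) p (1, 0)) (univ ×ˢ I) :=
    (contDiffOn_fderiv_uncurry hI hf).clm_apply contDiffOn_const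
  exact hD.congr fun p hp => pdx_eq_fderiv (differentiableAt_uncurry hI hf hp.2)

theorem pdt_pdx (hI : IsOpen I) (hf : ContDiffOn ℝ (⊤ : ℕ∞) (uncurry f) (univ ×ˢ I))
    (ht : t ∈ I) : pdt (pdx f) x t = pdx (pdt f) x t := by
  set D := fderiv ℝ (uncurry f)
  have hS : univ ×ˢ I ∈ nhds (x, t) := (isOpen_univ.prod hI).mem_nhds ⟨trivial, ht⟩
  have hD : HasFDerivAt D (fderiv ℝ D (x, t)) (x, t) :=
    (((contDiffOn_fderiv_uncurry hI hf).differentiableOn (by simp)).differentiableAt hS).hasFDerivAt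
  have hsymm : IsSymmSndFDerivAt ℝ (uncurry f) (x, t) :=
    (hf.contDiffAt hS).isSymmSndFDerivAt
      (by simpa using WithTop.coe_le_coe.2 (le_top : (2 : ℕ∞) ≤ ⊤))
  have hxt : pdt (pdx f) x t = fderiv ℝ D (x, t) (0, 1) (1, 0) := by
    have hpdx : (fun t' => pdx f x t') =ᶠ[nhds t] fun t' => D (x, t') (1, 0) := by
      filter_upwards [hI.mem_nhds ht] with t' ht'
      exact pdx_eq_fderiv (differentiableAt_uncurry hI hf ht')
    rw [pdt, hpdx.deriv_eq]
    simpa using ((hD.clm_apply (hasFDerivAt_const ((1 : ℝ), (0 : ℝ)) _)).hasDerivAt_slice_snd).deriv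
  have htx : pdx (pdt f) x t = fderiv ℝ D (x, t) (1, 0) (0, 1) := by
    have hpdt : (fun x' => pdt f x' t) = fun x' => D (x', t) (0, 1) :=
      funext fun x' => pdt_eq_fderiv (differentiableAt_uncurry hI hf ht)
    rw [pdx, hpdt]
    simpa using ((hD.clm_apply (hasFDerivAt_const ((0 : ℝ), (1 : ℝ)) _)).hasDerivAt_slice_fst).deriv
  rw [hxt, htx, hsymm]

theorem exists_const_of_hasDerivAt_zero (hI : IsOpen I) (hIc : IsPreconnected I)
    (hx : ∀ x t, t ∈ I → HasDerivAt (fun x' => f x' t) 0 x)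
    (ht : ∀ x t, t ∈ I → HasDerivAt (f x) 0 t) :
    ∃ c, ∀ x t, t ∈ I → f x t = c := by
  obtain ⟨c, hc⟩ := hI.exists_is_const_of_deriv_eq_zero hIc (f := f 0)
    (fun t ht' => (ht 0 t ht').differentiableAt.differentiableWithinAt)
    (fun t ht' => (ht 0 t ht').deriv)
  refine ⟨c, fun x t ht' => ?_⟩
  rw [← hc t ht']
  exact is_const_of_deriv_eq_zero (fun x' => (hx x' t ht').differentiableAt)
    (fun x' => (hx x' t ht').deriv) x 0

end Partials

def firstIntegral (l : ℝ) (u Y : ℝ → ℝ → ℝ) : ℝ → ℝ → ℝ := fun x t =>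
  2 * Y x t * pdx (pdx Y) x t - (pdx Y x t) ^ 2 + 4 * (l - u x t) * (Y x t) ^ 2

theorem hasDerivAt_firstIntegral_comp {y y₁ y₂ v : ℝ → ℝ} {y' y₁' y₂' v' s : ℝ} (l : ℝ)
    (hy : HasDerivAt y y' s) (hy₁ : HasDerivAt y₁ y₁' s) (hy₂ : HasDerivAt y₂ y₂' s)
    (hv : HasDerivAt v v' s) :
    HasDerivAt (fun s => 2 * y s * y₂ s - y₁ s ^ 2 + 4 * (l - v s) * y s ^ 2)
      (2 * y' * y₂ s + 2 * y s * y₂' - 2 * y₁ s * y₁' - 4 * v' * y s ^ 2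
        + 8 * (l - v s) * y s * y') s := by
  refine ((((hy.const_mul 2).mul hy₂).sub (hy₁.pow 2)).add
    (((hv.const_sub l).const_mul 4).mul (hy.pow 2))).congr_deriv ?_
  simp only [Pi.pow_apply]
  push_cast
  ring

variable {I : Set ℝ} {u Y : ℝ → ℝ → ℝ} {l x t : ℝ}

theorem hasDerivAt_firstIntegral_x (hI : IsOpen I)
    (hu : ContDiffOn ℝ (⊤ : ℕ∞) (uncurry u) (univ ×ˢ I))
    (hY : ContDiffOn ℝ (⊤ : ℕ∞) (uncurry Y) (univ ×ˢ I)) (ht : t ∈ I) :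
    HasDerivAt (fun x' => firstIntegral l u Y x' t)
      (2 * Y x t * (pdx (pdx (pdx Y)) x t - 4 * (u x t - l) * pdx Y x t
        - 2 * pdx u x t * Y x t)) x := by
  have hYx := contDiffOn_pdx hI hY
  refine (hasDerivAt_firstIntegral_comp l (hasDerivAt_pdx hI hY ht) (hasDerivAt_pdx hI hYx ht)
    (hasDerivAt_pdx hI (contDiffOn_pdx hI hYx) ht) (hasDerivAt_pdx hI hu ht)).congr_deriv ?_
  ring

/-- Used with `(G, A) = (Y, u)`, whose conclusion simplifies to a flow of the same shape for
`(G, A) = (∂_x Y, ∂_x u)`. -/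
theorem pdt_pdx_of_flow {G A : ℝ → ℝ → ℝ} (hI : IsOpen I)
    (hu : ContDiffOn ℝ (⊤ : ℕ∞) (uncurry u) (univ ×ˢ I))
    (hY : ContDiffOn ℝ (⊤ : ℕ∞) (uncurry Y) (univ ×ˢ I))
    (hG : ContDiffOn ℝ (⊤ : ℕ∞) (uncurry G) (univ ×ˢ I))
    (hA : ContDiffOn ℝ (⊤ : ℕ∞) (uncurry A) (univ ×ˢ I)) (ht : t ∈ I)
    (hflow : ∀ x', pdt G x' t = 2 * pdx A x' t * Y x' t - 2 * (u x' t + 2 * l) * pdx G x' t) :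
    pdt (pdx G) x t = 2 * pdx (pdx A) x t * Y x t + 2 * pdx A x t * pdx Y x t
      - 2 * pdx u x t * pdx G x t - 2 * (u x t + 2 * l) * pdx (pdx G) x t := by
  rw [pdt_pdx hI hG ht, pdx, funext hflow]
  refine ((((hasDerivAt_pdx hI (contDiffOn_pdx hI hA) ht).const_mul 2).mul
    (hasDerivAt_pdx hI hY ht)).sub ((((hasDerivAt_pdx hI hu ht).add_const (2 * l)).const_mul 2).mul
      (hasDerivAt_pdx hI (contDiffOn_pdx hI hG) ht))).deriv.trans ?_
  ring

theorem hasDerivAt_firstIntegral_t (hI : IsOpen I)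
    (hu : ContDiffOn ℝ (⊤ : ℕ∞) (uncurry u) (univ ×ˢ I))
    (hY : ContDiffOn ℝ (⊤ : ℕ∞) (uncurry Y) (univ ×ˢ I)) (ht : t ∈ I)
    (hkdv : pdt u x t = pdx (pdx (pdx u)) x t - 6 * u x t * pdx u x t)
    (hYxxx : pdx (pdx (pdx Y)) x t = 4 * (u x t - l) * pdx Y x t + 2 * pdx u x t * Y x t)
    (hYt : ∀ x', pdt Y x' t = 2 * pdx u x' t * Y x' t - 2 * (u x' t + 2 * l) * pdx Y x' t) :
    HasDerivAt (firstIntegral l u Y x) 0 t := by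
  have hux := contDiffOn_pdx hI hu
  have hYx := contDiffOn_pdx hI hY
  have hYxt : ∀ x', pdt (pdx Y) x' t
      = 2 * pdx (pdx u) x' t * Y x' t - 2 * (u x' t + 2 * l) * pdx (pdx Y) x' t := fun x' => by
    rw [pdt_pdx_of_flow hI hu hY hY hu ht hYt]
    ring
  have hYxxt := pdt_pdx_of_flow (x := x) hI hu hY hYx hux ht hYxt
  refine (hasDerivAt_firstIntegral_comp l (hasDerivAt_pdt hI hY ht) (hasDerivAt_pdt hI hYx ht)
    (hasDerivAt_pdt hI (contDiffOn_pdx hI hYx) ht) (hasDerivAt_pdt hI hu ht)).congr_deriv ?_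
  rw [hYxxt, hYxt, hkdv, hYt, hYxxx]
  ring

end KdV

open KdV

/-- if `u` solves KdV, `Y` solves the stationary equation
`∂ₓ³Y = 4(u−λ)∂ₓY + 2(∂ₓu)Y` and the evolution `∂ₜY = 2(∂ₓu)Y − 2(u+2λ)∂ₓY`, then
`Φ = 2Y∂ₓ²Y − (∂ₓY)² + 4(λ−u)Y²` satisfies `∂ₓΦ = ∂ₜΦ = 0`, i.e. `Φ` is an absolute
constant on `ℝ × I`. -/
theorem statement4
    (a b : ℝ) (I : Set ℝ) (hI : I = Set.Ioo a b)
    (u Y : ℝ → ℝ → ℝ) (l : ℝ)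
    (hu : ContDiffOn ℝ (⊤ : ℕ∞) (uncurry u) (univ ×ˢ I))
    (hY : ContDiffOn ℝ (⊤ : ℕ∞) (uncurry Y) (univ ×ˢ I))
    (hkdv : ∀ x t, t ∈ I →
      pdt u x t = pdx (pdx (pdx u)) x t - 6 * u x t * pdx u x t)
    (hYxxx : ∀ x t, t ∈ I →
      pdx (pdx (pdx Y)) x t = 4*(u x t - l)*pdx Y x t + 2*pdx u x t * Y x t)
    (hYt : ∀ x t, t ∈ I →
      pdt Y x t = 2*pdx u x t * Y x t - 2*(u x t + 2*l)*pdx Y x t)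
    (Phi : ℝ → ℝ → ℝ)
    (hPhi : ∀ x t, Phi x t
      = 2 * Y x t * pdx (pdx Y) x t - (pdx Y x t)^2 + 4*(l - u x t)*(Y x t)^2) :
    (∀ x t, t ∈ I → pdx Phi x t = 0 ∧ pdt Phi x t = 0)
    ∧ ∃ c : ℝ, ∀ x t, t ∈ I → Phi x t = c := by
  have hIo : IsOpen I := hI ▸ isOpen_Ioo
  obtain rfl : Phi = firstIntegral l u Y := funext₂ hPhi
  have hx : ∀ x t, t ∈ I → HasDerivAt (fun x' => firstIntegral l u Y x' t) 0 x := fun x t ht =>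
    (hasDerivAt_firstIntegral_x hIo hu hY ht).congr_deriv (by rw [hYxxx x t ht]; ring)
  have ht : ∀ x t, t ∈ I → HasDerivAt (firstIntegral l u Y x) 0 t := fun x t ht =>
    hasDerivAt_firstIntegral_t hIo hu hY ht (hkdv x t ht) (hYxxx x t ht) (fun x' => hYt x' t ht)
  exact ⟨fun x t h => ⟨(hx x t h).deriv, (ht x t h).deriv⟩,
    exists_const_of_hasDerivAt_zero hIo (hI ▸ isPreconnected_Ioo) hx ht⟩
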